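/- Let u be a real number with 0 < u < arccosh(3/2), p a positive integer, ξ := u + 2pπi, and σ₀ := (φ(u) + 2πi)/ξ. Then σ₀ ∈ U₀ := {z ∈ ℂ : 0 < Re z + (u/(2pπ))·Im z < 1/p}, the first complex derivative of F vanishes at σ₀ (F′(σ₀) = 0), and the second derivative satisfies F″(σ₀) = i·ξ·√((2cosh u + 1)(3 − 2cosh u)), where √ is the nonnegative real square root; in particular Re F″(σ₀) = −2pπ·√((2cosh u + 1)(3 − 2cosh u)) < 0. -/

import Mathlib

open Complex MeasureTheory

/-- Inverse hyperbolic cosine. -/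
noncomputable def arccosh (x : ℝ) : ℝ := Real.log (x + Real.sqrt (x ^ 2 - 1))

/-- ξ = u + 2pπi -/
noncomputable def xiC (u : ℝ) (p : ℕ) : ℂ := (u : ℂ) + 2 * p * Real.pi * Complex.I

/-- The dilogarithm. -/
noncomputable def Li2 (z : ℂ) : ℂ := -∫ t in (0:ℝ)..1, Complex.log (1 - t * z) / t

/-- φ(u). -/
noncomputable def phiu (u : ℝ) : ℂ :=
  Complex.log ((Real.cosh u : ℂ) - 1/2 -
    (Complex.I / 2) * (Real.sqrt ((2 * Real.cosh u + 1) * (3 - 2 * Real.cosh u)) : ℂ))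

/-- The potential function F. -/
noncomputable def Ffun (u : ℝ) (p : ℕ) (z : ℂ) : ℂ :=
  (1 / xiC u p) * Li2 (Complex.exp (-(xiC u p) * (1 + z))) -
  (1 / xiC u p) * Li2 (Complex.exp (-(xiC u p) * (1 - z))) +
  (u : ℂ) * z - 2 * Real.pi * Complex.I

/-!
Differentiating under the integral sign gives `Li₂′(z) = −log(1 − z)/z`, hence
`F′(z) = log(1 − e^{−ξ(1+z)}) + log(1 − e^{−ξ(1−z)}) + u` where both exponentials have modulus
`< 1`. As `ξσ₀ = φ(u) + 2πi` and `e^{−ξ} = e^{−u}`, the two exponentials at `σ₀` are `e^{−u}y^{∓1}`,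
where `y = e^{φ(u)}` is the unit-modulus root of `y² − (2cosh u − 1)y + 1`. This quadratic
relation is exactly `(1 − e^{−u}y⁻¹)(1 − e^{−u}y) = e^{−u}`, which gives `F′(σ₀) = 0` and
`F″(σ₀) = ξ(y⁻¹ − y) = iξ√((2cosh u + 1)(3 − 2cosh u))`. Finally `φ(u) = i·arg y` with
`−π < arg y < 0`, which places `σ₀` in `U₀`.
-/

open Filter Topology Set

lemma norm_log_one_add_le_mul_inv {w : ℂ} (hw : ‖w‖ < 1) :
    ‖log (1 + w)‖ ≤ ‖w‖ * (1 - ‖w‖)⁻¹ := by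
  have hpos : 0 < 1 - ‖w‖ := by linarith
  refine (norm_log_one_add_le hw).trans ?_
  rw [← sub_nonneg]
  have : ‖w‖ * (1 - ‖w‖)⁻¹ - (‖w‖ ^ 2 * (1 - ‖w‖)⁻¹ / 2 + ‖w‖) = ‖w‖ ^ 2 / 2 * (1 - ‖w‖)⁻¹ := by
    field_simp
    ring
  rw [this]
  positivity

lemma re_one_sub_pos {a : ℂ} (ha : ‖a‖ < 1) : 0 < (1 - a).re := by
  rw [sub_re, one_re, sub_pos]
  exact (re_le_norm a).trans_lt ha

lemma one_sub_mem_slitPlane {w : ℂ} (hw : ‖w‖ < 1) : 1 - w ∈ slitPlane :=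
  mem_slitPlane_iff.2 (Or.inl (re_one_sub_pos hw))

lemma norm_ofReal_mul_le {t : ℝ} (ht : t ∈ Icc (0 : ℝ) 1) (x : ℂ) : ‖(t : ℂ) * x‖ ≤ ‖x‖ := by
  rw [norm_mul, Complex.norm_of_nonneg ht.1]
  exact mul_le_of_le_one_left (norm_nonneg x) ht.2

lemma one_sub_ofReal_mul_mem_slitPlane {x : ℂ} (hx : ‖x‖ < 1) {t : ℝ} (ht : t ∈ Icc (0 : ℝ) 1) :
    1 - t * x ∈ slitPlane :=
  one_sub_mem_slitPlane ((norm_ofReal_mul_le ht x).trans_lt hx)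

lemma norm_log_one_sub_mul_div_le {z : ℂ} (hz : ‖z‖ < 1) {t : ℝ} (ht : t ∈ Ioc (0 : ℝ) 1) :
    ‖log (1 - t * z) / t‖ ≤ ‖z‖ * (1 - ‖z‖)⁻¹ := by
  have htz : ‖-((t : ℂ) * z)‖ = t * ‖z‖ := by
    rw [norm_neg, norm_mul, Complex.norm_of_nonneg ht.1.le]
  have htz0 : 0 ≤ t * ‖z‖ := mul_nonneg ht.1.le (norm_nonneg z)
  have htz1 : t * ‖z‖ ≤ ‖z‖ := mul_le_of_le_one_left (norm_nonneg z) ht.2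
  have hlog := norm_log_one_add_le_mul_inv (w := -((t : ℂ) * z)) (by rw [htz]; linarith)
  rw [← sub_eq_add_neg, htz] at hlog
  rw [norm_div, Complex.norm_of_nonneg ht.1.le, div_le_iff₀ ht.1]
  calc ‖log (1 - t * z)‖ ≤ t * ‖z‖ * (1 - t * ‖z‖)⁻¹ := hlog
    _ ≤ t * ‖z‖ * (1 - ‖z‖)⁻¹ := by gcongr
    _ = ‖z‖ * (1 - ‖z‖)⁻¹ * t := by ring

lemma aestronglyMeasurable_log_one_sub_mul_div (x : ℂ) (μ : Measure ℝ) :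
    AEStronglyMeasurable (fun t : ℝ => log (1 - t * x) / t) μ :=
  Measurable.aestronglyMeasurable (by fun_prop)

lemma intervalIntegrable_log_one_sub_mul_div {z : ℂ} (hz : ‖z‖ < 1) :
    IntervalIntegrable (fun t : ℝ => log (1 - t * z) / t) volume 0 1 := by
  refine (intervalIntegrable_const (c := ‖z‖ * (1 - ‖z‖)⁻¹)).mono_fun'
    (aestronglyMeasurable_log_one_sub_mul_div z _) ?_
  rw [uIoc_of_le zero_le_one, EventuallyLE, ae_restrict_iff' measurableSet_Ioc]
  exact Eventually.of_forall fun t ht => norm_log_one_sub_mul_div_le hz ht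

lemma hasDerivAt_log_one_sub_mul_div {t : ℝ} (ht : t ≠ 0) {x : ℂ} (hx : 1 - t * x ∈ slitPlane) :
    HasDerivAt (fun x : ℂ => log (1 - t * x) / t) (-(1 - t * x)⁻¹) x := by
  have h := (((hasDerivAt_id x).const_mul (t : ℂ)).const_sub 1).clog hx
  refine (h.div_const (t : ℂ)).congr_deriv ?_
  simp only [id, mul_one]
  field_simp [ofReal_ne_zero.2 ht, slitPlane_ne_zero hx]

lemma integral_inv_one_sub_mul {z : ℂ} (hz : ‖z‖ < 1) (hz0 : z ≠ 0) :
    ∫ t in (0 : ℝ)..1, (1 - t * z)⁻¹ = -log (1 - z) / z := by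
  have h := log_eq_integral (mem_slitPlane_of_norm_lt_one (z := -z) (by rwa [norm_neg]))
  simp only [real_smul, mul_neg, ← sub_eq_add_neg] at h
  rw [h, neg_mul, neg_neg, mul_div_cancel_left₀ _ hz0]

theorem hasDerivAt_Li2 {z : ℂ} (hz : ‖z‖ < 1) (hz0 : z ≠ 0) :
    HasDerivAt Li2 (-log (1 - z) / z) z := by
  obtain ⟨r, hzr, hr1⟩ := exists_between hz
  have hs : {x : ℂ | ‖x‖ < r} ∈ 𝓝 z := (isOpen_lt continuous_norm continuous_const).mem_nhds hzr
  have key := intervalIntegral.hasDerivAt_integral_of_dominated_loc_of_deriv_le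
    (μ := volume) (a := 0) (b := 1) (F := fun x t => log (1 - t * x) / t)
    (F' := fun x t => -(1 - t * x)⁻¹) (bound := fun _ => (1 - r)⁻¹) hs
    (Eventually.of_forall fun x => aestronglyMeasurable_log_one_sub_mul_div x _)
    (intervalIntegrable_log_one_sub_mul_div hz) (by fun_prop) ?_ intervalIntegrable_const ?_
  · rw [← integral_inv_one_sub_mul hz hz0]
    exact key.2.neg.congr_deriv (by simp [intervalIntegral.integral_neg])
  all_goals
    rw [uIoc_of_le zero_le_one]
    refine Eventually.of_forall fun t ht x (hx : ‖x‖ < r) => ?_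
    have ht' : t ∈ Icc (0 : ℝ) 1 := Ioc_subset_Icc_self ht
  · have h := norm_one_add_mul_inv_le ht' (z := -x) (by rw [norm_neg]; linarith)
    rw [mul_neg, ← sub_eq_add_neg, norm_neg] at h
    rw [norm_neg]
    exact h.trans (inv_anti₀ (by linarith) (by linarith))
  · exact hasDerivAt_log_one_sub_mul_div ht.1.ne'
      (one_sub_ofReal_mul_mem_slitPlane (hx.trans hr1) ht')

lemma log_one_sub_add_log_one_sub {a b : ℂ} (ha : ‖a‖ < 1) (hb : ‖b‖ < 1) :
    log (1 - a) + log (1 - b) = log ((1 - a) * (1 - b)) := by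
  have harg {w : ℂ} (hw : ‖w‖ < 1) : |arg (1 - w)| < Real.pi / 2 :=
    abs_arg_lt_pi_div_two_iff.2 (Or.inl (re_one_sub_pos hw))
  have hsum := (abs_add_le _ _).trans_lt (add_lt_add (harg ha) (harg hb))
  rw [add_halves] at hsum
  exact (log_mul (slitPlane_ne_zero (one_sub_mem_slitPlane ha))
    (slitPlane_ne_zero (one_sub_mem_slitPlane hb)) ⟨(abs_lt.1 hsum).1, (abs_lt.1 hsum).2.le⟩).symm

lemma one_sub_mul_inv_mul_one_sub {y : ℂ} (hy : y ≠ 0) {u : ℝ}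
    (h : y + y⁻¹ = 2 * (Real.cosh u : ℂ) - 1) :
    (1 - Real.exp (-u) * y⁻¹) * (1 - Real.exp (-u) * y) = Real.exp (-u) := by
  have hcosh : (Real.cosh u : ℂ) = (Real.exp u + Real.exp (-u)) / 2 := by
    rw [Real.cosh_eq]; push_cast; ring
  have hexp : (Real.exp u : ℂ) * Real.exp (-u) = 1 := by
    rw [← ofReal_mul, ← Real.exp_add, add_neg_cancel, Real.exp_zero, ofReal_one]
  linear_combination (-(Real.exp (-u) : ℂ)) * h + (Real.exp (-u) : ℂ) ^ 2 * inv_mul_cancel₀ hy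
    + (-2 * (Real.exp (-u) : ℂ)) * hcosh - hexp

lemma div_one_sub_sub_div_one_sub {q y : ℂ} (hq : q ≠ 0) (h : (1 - q * y⁻¹) * (1 - q * y) = q) :
    q * y⁻¹ / (1 - q * y⁻¹) - q * y / (1 - q * y) = y⁻¹ - y := by
  have hprod : (1 - q * y⁻¹) * (1 - q * y) ≠ 0 := by rwa [h]
  rw [div_sub_div _ _ (left_ne_zero_of_mul hprod) (right_ne_zero_of_mul hprod), h,
    div_eq_iff hq]
  ring

lemma hasDerivAt_neg_mul_one_add (ξ z : ℂ) : HasDerivAt (fun z => -ξ * (1 + z)) (-ξ) z := by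
  simpa using ((hasDerivAt_id z).const_add 1).const_mul (-ξ)

lemma hasDerivAt_neg_mul_one_sub (ξ z : ℂ) : HasDerivAt (fun z => -ξ * (1 - z)) ξ z := by
  simpa using ((hasDerivAt_id z).const_sub 1).const_mul (-ξ)

section Potential

variable (u : ℝ) (p : ℕ)

lemma xiC_re : (xiC u p).re = u := by simp [xiC]

lemma xiC_im : (xiC u p).im = 2 * p * Real.pi := by simp [xiC]

lemma xiC_ne_zero {u : ℝ} (hu : u ≠ 0) (p : ℕ) : xiC u p ≠ 0 :=
  fun h => hu (by rw [← xiC_re u p, h, zero_re])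

lemma exp_neg_xiC : exp (-xiC u p) = Real.exp (-u) := by
  have h : -xiC u p = ↑(-u) + ((-p : ℤ) : ℂ) * (2 * Real.pi * I) := by
    rw [xiC]; push_cast; ring
  rw [h, exp_add, exp_int_mul_two_pi_mul_I, mul_one, ofReal_exp]

noncomputable def FfunDeriv (z : ℂ) : ℂ :=
  log (1 - exp (-xiC u p * (1 + z))) + log (1 - exp (-xiC u p * (1 - z))) + u

def FfunDomain : Set ℂ :=
  {z | ‖exp (-xiC u p * (1 + z))‖ < 1 ∧ ‖exp (-xiC u p * (1 - z))‖ < 1}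

lemma isOpen_FfunDomain : IsOpen (FfunDomain u p) :=
  (isOpen_lt (f := fun z => ‖exp (-xiC u p * (1 + z))‖) (by fun_prop) continuous_const).inter
    (isOpen_lt (f := fun z => ‖exp (-xiC u p * (1 - z))‖) (by fun_prop) continuous_const)

variable {u p}

lemma hasDerivAt_Ffun (hu : u ≠ 0) {z : ℂ} (hz : z ∈ FfunDomain u p) :
    HasDerivAt (Ffun u p) (FfunDeriv u p z) z := by
  have hplus := hasDerivAt_neg_mul_one_add (xiC u p) z
  have hminus := hasDerivAt_neg_mul_one_sub (xiC u p) z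
  have h1 := ((hasDerivAt_Li2 hz.1 (exp_ne_zero _)).comp z hplus.cexp).const_mul (1 / xiC u p)
  have h2 := ((hasDerivAt_Li2 hz.2 (exp_ne_zero _)).comp z hminus.cexp).const_mul (1 / xiC u p)
  refine (((h1.sub h2).add ((hasDerivAt_id z).const_mul (u : ℂ))).sub_const
    (2 * Real.pi * I)).congr_deriv ?_
  simp only [FfunDeriv]
  field_simp [exp_ne_zero, xiC_ne_zero hu p]
  ring

lemma hasDerivAt_FfunDeriv {z : ℂ} (hz : z ∈ FfunDomain u p) :
    HasDerivAt (FfunDeriv u p)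
      (xiC u p * (exp (-xiC u p * (1 + z)) / (1 - exp (-xiC u p * (1 + z))) -
        exp (-xiC u p * (1 - z)) / (1 - exp (-xiC u p * (1 - z))))) z := by
  have hplus := hasDerivAt_neg_mul_one_add (xiC u p) z
  have hminus := hasDerivAt_neg_mul_one_sub (xiC u p) z
  have h1 := (hplus.cexp.const_sub 1).clog (one_sub_mem_slitPlane hz.1)
  have h2 := (hminus.cexp.const_sub 1).clog (one_sub_mem_slitPlane hz.2)
  refine ((h1.add h2).add_const (u : ℂ)).congr_deriv ?_
  ring

lemma deriv_deriv_Ffun (hu : u ≠ 0) {z : ℂ} (hz : z ∈ FfunDomain u p) :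
    deriv (deriv (Ffun u p)) z =
      xiC u p * (exp (-xiC u p * (1 + z)) / (1 - exp (-xiC u p * (1 + z))) -
        exp (-xiC u p * (1 - z)) / (1 - exp (-xiC u p * (1 - z)))) := by
  have h : deriv (Ffun u p) =ᶠ[𝓝 z] FfunDeriv u p := by
    filter_upwards [(isOpen_FfunDomain u p).mem_nhds hz] with w hw
    exact (hasDerivAt_Ffun hu hw).deriv
  rw [h.deriv_eq, (hasDerivAt_FfunDeriv hz).deriv]

lemma exp_neg_xiC_mul_one_add (hu : u ≠ 0) (w : ℂ) :
    exp (-xiC u p * (1 + (w + 2 * Real.pi * I) / xiC u p)) = Real.exp (-u) * (exp w)⁻¹ := by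
  have h : -xiC u p * (1 + (w + 2 * Real.pi * I) / xiC u p) =
      -xiC u p + -w + ((-1 : ℤ) : ℂ) * (2 * Real.pi * I) := by
    field_simp [xiC_ne_zero hu p]
    push_cast
    ring
  rw [h, exp_add, exp_add, exp_int_mul_two_pi_mul_I, exp_neg_xiC, exp_neg, mul_one]

lemma exp_neg_xiC_mul_one_sub (hu : u ≠ 0) (w : ℂ) :
    exp (-xiC u p * (1 - (w + 2 * Real.pi * I) / xiC u p)) = Real.exp (-u) * exp w := by
  have h : -xiC u p * (1 - (w + 2 * Real.pi * I) / xiC u p) =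
      -xiC u p + w + ((1 : ℤ) : ℂ) * (2 * Real.pi * I) := by
    field_simp [xiC_ne_zero hu p]
    push_cast
    ring
  rw [h, exp_add, exp_add, exp_int_mul_two_pi_mul_I, exp_neg_xiC, mul_one]

lemma re_add_mul_im_div_xiC (hp : p ≠ 0) (θ : ℝ) :
    ((θ * I) / xiC u p).re + u / (2 * p * Real.pi) * ((θ * I) / xiC u p).im =
      θ / (2 * p * Real.pi) := by
  have hpπ : 0 < 2 * (p : ℝ) * Real.pi := by positivity
  have hnorm : normSq (xiC u p) ≠ 0 := by
    rw [normSq_apply, xiC_re, xiC_im]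
    exact (add_pos_of_nonneg_of_pos (mul_self_nonneg u) (mul_pos hpπ hpπ)).ne'
  rw [div_re, div_im, xiC_re, xiC_im]
  simp only [mul_re, mul_im, ofReal_re, ofReal_im, I_re, I_im]
  rw [normSq_apply, xiC_re, xiC_im] at hnorm ⊢
  field_simp
  ring

end Potential

section PhiBase

/-- For `1 ≤ c < 3/2`, the root of `y² − (2c − 1) y + 1` in the open lower half-plane. -/
noncomputable def phiBase (c : ℝ) : ℂ :=
  (c : ℂ) - 1/2 - (I / 2) * (Real.sqrt ((2 * c + 1) * (3 - 2 * c)) : ℂ)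

lemma phiu_eq_log_phiBase (u : ℝ) : phiu u = log (phiBase (Real.cosh u)) := rfl

lemma arg_phiBase_neg {c : ℝ} (hc : 0 < (2 * c + 1) * (3 - 2 * c)) : arg (phiBase c) < 0 := by
  rw [arg_neg_iff]
  simp [phiBase, Real.sqrt_pos.2 hc]

variable {c : ℝ} (hc : 0 ≤ (2 * c + 1) * (3 - 2 * c))
include hc

lemma norm_phiBase : ‖phiBase c‖ = 1 := by
  have hs := Real.sq_sqrt hc
  have hsq : normSq (phiBase c) = 1 := by
    simp only [phiBase, normSq_apply, sub_re, sub_im, mul_re, mul_im, ofReal_re, ofReal_im,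
      div_re, div_im, I_re, I_im, one_re, one_im]
    norm_num
    linear_combination hs / 4
  rw [norm_def, hsq, Real.sqrt_one]

lemma phiBase_ne_zero : phiBase c ≠ 0 :=
  norm_ne_zero_iff.1 (by rw [norm_phiBase hc]; exact one_ne_zero)

lemma phiBase_inv :
    (phiBase c)⁻¹ = (c : ℂ) - 1/2 + (I / 2) * (Real.sqrt ((2 * c + 1) * (3 - 2 * c)) : ℂ) := by
  have hs : (Real.sqrt ((2 * c + 1) * (3 - 2 * c)) : ℂ) ^ 2 = (2 * c + 1) * (3 - 2 * c) := by
    exact_mod_cast Real.sq_sqrt hc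
  refine inv_eq_of_mul_eq_one_right ?_
  rw [phiBase]
  linear_combination (-(Real.sqrt ((2 * c + 1) * (3 - 2 * c)) : ℂ) ^ 2 / 4) * I_sq + hs / 4

lemma phiBase_add_inv : phiBase c + (phiBase c)⁻¹ = 2 * (c : ℂ) - 1 := by
  rw [phiBase_inv hc, phiBase]
  ring

lemma inv_sub_phiBase :
    (phiBase c)⁻¹ - phiBase c = I * (Real.sqrt ((2 * c + 1) * (3 - 2 * c)) : ℂ) := by
  rw [phiBase_inv hc, phiBase]
  ring

end PhiBase

section SaddlePoint

variable {u : ℝ} {p : ℕ}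

lemma cosh_lt_three_halves (hu0 : 0 ≤ u) (hu1 : u < arccosh (3/2)) : Real.cosh u < 3 / 2 :=
  (Real.arcosh_lt_arcosh (Real.cosh_pos u) (by norm_num)).1 (by rwa [Real.arcosh_cosh hu0])

variable (hu0 : 0 < u) (hc : 0 < (2 * Real.cosh u + 1) * (3 - 2 * Real.cosh u))
include hu0 hc

lemma exp_neg_xiC_mul_one_add_saddle :
    exp (-xiC u p * (1 + (phiu u + 2 * Real.pi * I) / xiC u p)) =
      Real.exp (-u) * (phiBase (Real.cosh u))⁻¹ := by
  rw [exp_neg_xiC_mul_one_add hu0.ne', phiu_eq_log_phiBase, exp_log (phiBase_ne_zero hc.le)]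

lemma exp_neg_xiC_mul_one_sub_saddle :
    exp (-xiC u p * (1 - (phiu u + 2 * Real.pi * I) / xiC u p)) =
      Real.exp (-u) * phiBase (Real.cosh u) := by
  rw [exp_neg_xiC_mul_one_sub hu0.ne', phiu_eq_log_phiBase, exp_log (phiBase_ne_zero hc.le)]

lemma norm_exp_neg_mul_phiBase_lt_one :
    ‖(Real.exp (-u) : ℂ) * phiBase (Real.cosh u)‖ < 1 ∧
      ‖(Real.exp (-u) : ℂ) * (phiBase (Real.cosh u))⁻¹‖ < 1 := by
  rw [norm_mul, norm_mul, norm_inv, norm_phiBase hc.le, inv_one, mul_one, norm_real,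
    Real.norm_of_nonneg (Real.exp_pos _).le, Real.exp_lt_one_iff, and_self]
  linarith

lemma saddle_mem_FfunDomain : (phiu u + 2 * Real.pi * I) / xiC u p ∈ FfunDomain u p := by
  obtain ⟨h, hinv⟩ := norm_exp_neg_mul_phiBase_lt_one hu0 hc
  exact ⟨by rwa [exp_neg_xiC_mul_one_add_saddle hu0 hc],
    by rwa [exp_neg_xiC_mul_one_sub_saddle hu0 hc]⟩

lemma deriv_Ffun_saddle : deriv (Ffun u p) ((phiu u + 2 * Real.pi * I) / xiC u p) = 0 := by
  obtain ⟨h, hinv⟩ := norm_exp_neg_mul_phiBase_lt_one hu0 hc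
  rw [(hasDerivAt_Ffun hu0.ne' (saddle_mem_FfunDomain hu0 hc)).deriv, FfunDeriv,
    exp_neg_xiC_mul_one_add_saddle hu0 hc, exp_neg_xiC_mul_one_sub_saddle hu0 hc,
    log_one_sub_add_log_one_sub hinv h,
    one_sub_mul_inv_mul_one_sub (phiBase_ne_zero hc.le) (phiBase_add_inv hc.le),
    ← ofReal_log (Real.exp_pos _).le, Real.log_exp, ofReal_neg, neg_add_cancel]

lemma deriv_deriv_Ffun_saddle :
    deriv (deriv (Ffun u p)) ((phiu u + 2 * Real.pi * I) / xiC u p) =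
      I * xiC u p * (Real.sqrt ((2 * Real.cosh u + 1) * (3 - 2 * Real.cosh u)) : ℂ) := by
  rw [deriv_deriv_Ffun hu0.ne' (saddle_mem_FfunDomain hu0 hc),
    exp_neg_xiC_mul_one_add_saddle hu0 hc, exp_neg_xiC_mul_one_sub_saddle hu0 hc,
    div_one_sub_sub_div_one_sub (ofReal_ne_zero.2 (Real.exp_pos _).ne')
      (one_sub_mul_inv_mul_one_sub (phiBase_ne_zero hc.le) (phiBase_add_inv hc.le)),
    inv_sub_phiBase hc.le]
  ring

omit hu0 in
lemma phiu_add_two_pi_I :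
    phiu u + 2 * Real.pi * I = ((arg (phiBase (Real.cosh u)) + 2 * Real.pi : ℝ) : ℂ) * I := by
  rw [phiu_eq_log_phiBase, log, norm_phiBase hc.le, Real.log_one]
  push_cast
  ring

end SaddlePoint

/-- The saddle point σ₀ lies in U₀, `F′(σ₀) = 0`, and
`F″(σ₀) = iξ√((2cosh u + 1)(3 − 2cosh u))`, whose real part is negative. -/
theorem Ffun_saddle_point (u : ℝ) (hu0 : 0 < u) (hu1 : u < arccosh (3/2))
    (p : ℕ) (hp : 0 < p) :
    (0 < ((phiu u + 2 * Real.pi * Complex.I) / xiC u p).re +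
        (u / (2 * p * Real.pi)) * ((phiu u + 2 * Real.pi * Complex.I) / xiC u p).im ∧
     ((phiu u + 2 * Real.pi * Complex.I) / xiC u p).re +
        (u / (2 * p * Real.pi)) * ((phiu u + 2 * Real.pi * Complex.I) / xiC u p).im
        < 1 / p) ∧
    deriv (Ffun u p) ((phiu u + 2 * Real.pi * Complex.I) / xiC u p) = 0 ∧
    deriv (deriv (Ffun u p)) ((phiu u + 2 * Real.pi * Complex.I) / xiC u p) =
      Complex.I * xiC u p *
        (Real.sqrt ((2 * Real.cosh u + 1) * (3 - 2 * Real.cosh u)) : ℂ) ∧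
    (deriv (deriv (Ffun u p)) ((phiu u + 2 * Real.pi * Complex.I) / xiC u p)).re =
      -2 * p * Real.pi * Real.sqrt ((2 * Real.cosh u + 1) * (3 - 2 * Real.cosh u)) ∧
    (deriv (deriv (Ffun u p)) ((phiu u + 2 * Real.pi * Complex.I) / xiC u p)).re < 0 := by
  have hc : 0 < (2 * Real.cosh u + 1) * (3 - 2 * Real.cosh u) := by
    nlinarith [Real.one_le_cosh u, cosh_lt_three_halves hu0.le hu1]
  have hpπ : 0 < 2 * (p : ℝ) * Real.pi := by positivity
  have hF''_re : (deriv (deriv (Ffun u p)) ((phiu u + 2 * Real.pi * I) / xiC u p)).re =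
      -2 * p * Real.pi * Real.sqrt ((2 * Real.cosh u + 1) * (3 - 2 * Real.cosh u)) := by
    rw [deriv_deriv_Ffun_saddle hu0 hc]
    simp [xiC_re, xiC_im]
  have hU₀ := re_add_mul_im_div_xiC (u := u) hp.ne' (arg (phiBase (Real.cosh u)) + 2 * Real.pi)
  rw [← phiu_add_two_pi_I hc] at hU₀
  refine ⟨⟨?_, ?_⟩, deriv_Ffun_saddle hu0 hc, deriv_deriv_Ffun_saddle hu0 hc, hF''_re, ?_⟩
  · rw [hU₀]
    exact div_pos (by linarith [neg_pi_lt_arg (phiBase (Real.cosh u)), Real.pi_pos]) hpπ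
  · rw [hU₀, div_lt_div_iff₀ hpπ (Nat.cast_pos.2 hp)]
    nlinarith [mul_pos (neg_pos.2 (arg_phiBase_neg hc)) (Nat.cast_pos.2 hp : (0 : ℝ) < p)]
  · rw [hF''_re]
    nlinarith [mul_pos hpπ (Real.sqrt_pos.2 hc)]
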